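/- Assume the TBT matrix T is invertible. Then Γ̂_1^τ = U·Γ_1·U_{2m}J_{2m} + [0 M_{31}] and Γ̂_2^τ = U·Γ_2·U_{2n}J_{2n} + [0 M_{32}], where ^τ denotes the transpose (without conjugation) and [0 M_{3p}] has its left block equal to zero (of size mn×m for p=1 and mn×n for p=2). -/

import Mathlib

open Matrix

noncomputable section

/-- The scalar sequence `a_r`: `0` for `r < 0`, `i/2` for `r = 0`, `i` for `r > 0`. -/
def aC (r : ℤ) : ℂ := if r < 0 then 0 else if r = 0 then Complex.I / 2 else Complex.I

/-- `A_1`: block matrix `{𝒜_{1,p−q}}` with blocks `0`, `(i/2)I_m`, `i·I_m`. -/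
def A1 (m n : ℕ) : Matrix (Fin n × Fin m) (Fin n × Fin m) ℂ :=
  Matrix.of fun r c => if r.2 = c.2 then aC (((r.1 : ℕ) : ℤ) - ((c.1 : ℕ) : ℤ)) else 0

/-- `A_2 = diag{𝒜_{2,0}, …, 𝒜_{2,0}}`. -/
def A2 (m n : ℕ) : Matrix (Fin n × Fin m) (Fin n × Fin m) ℂ :=
  Matrix.of fun r c => if r.1 = c.1 then aC (((r.2 : ℕ) : ℤ) - ((c.2 : ℕ) : ℤ)) else 0

/-- `𝒜_1 = {a_{j−ℓ}}_{j,ℓ=1}^n`. -/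
def calA1 (n : ℕ) : Matrix (Fin n) (Fin n) ℂ :=
  Matrix.of fun p q => aC (((p : ℕ) : ℤ) - ((q : ℕ) : ℤ))

/-- `𝒜_2 = {a_{j−ℓ}}_{j,ℓ=1}^m`. -/
def calA2 (m : ℕ) : Matrix (Fin m) (Fin m) ℂ :=
  Matrix.of fun j l => aC (((j : ℕ) : ℤ) - ((l : ℕ) : ℤ))

/-- The Toeplitz-block Toeplitz matrix `T`, entry `t_{p−q}^{(j−ℓ)}`. -/
def TBT (m n : ℕ) (t : ℤ → ℤ → ℂ) : Matrix (Fin n × Fin m) (Fin n × Fin m) ℂ :=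
  Matrix.of fun r c =>
    t (((r.1 : ℕ) : ℤ) - ((c.1 : ℕ) : ℤ)) (((r.2 : ℕ) : ℤ) - ((c.2 : ℕ) : ℤ))

/-- `M_{11}`: block column, `p`-th block `(1/2)𝒯_0 + Σ_{s=1}^{p−1} 𝒯_s`. -/
def M11 (m n : ℕ) (t : ℤ → ℤ → ℂ) : Matrix (Fin n × Fin m) (Fin m) ℂ :=
  Matrix.of fun r l => (1 / 2 : ℂ) * t 0 (((r.2 : ℕ) : ℤ) - ((l : ℕ) : ℤ))
    + ∑ s ∈ Finset.range (r.1 : ℕ), t ((s : ℤ) + 1) (((r.2 : ℕ) : ℤ) - ((l : ℕ) : ℤ))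

/-- `M_{21} = [I_m I_m … I_m]`. -/
def M21 (m n : ℕ) : Matrix (Fin m) (Fin n × Fin m) ℂ :=
  Matrix.of fun j c => if j = c.2 then 1 else 0

/-- `M_{31} = M_{21}^*`. -/
def M31 (m n : ℕ) : Matrix (Fin n × Fin m) (Fin m) ℂ := (M21 m n)ᴴ

/-- `M_{41}`: block row, `q`-th block `(1/2)𝒯_0 + Σ_{s=1}^{q−1} 𝒯_{−s}`. -/
def M41 (m n : ℕ) (t : ℤ → ℤ → ℂ) : Matrix (Fin m) (Fin n × Fin m) ℂ :=
  Matrix.of fun j c => (1 / 2 : ℂ) * t 0 (((j : ℕ) : ℤ) - ((c.2 : ℕ) : ℤ))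
    + ∑ s ∈ Finset.range (c.1 : ℕ), t (-((s : ℤ) + 1)) (((j : ℕ) : ℤ) - ((c.2 : ℕ) : ℤ))

/-- `j`-th entry of the column `ℳ_{12}^{(r)}`. -/
def m12e (m : ℕ) (t : ℤ → ℤ → ℂ) (r : ℤ) (j : Fin m) : ℂ :=
  (1 / 2 : ℂ) * t r 0 + ∑ s ∈ Finset.range (j : ℕ), t r ((s : ℤ) + 1)

/-- `ℓ`-th entry of the row `ℳ_{42}^{(r)}`. -/
def m42e (m : ℕ) (t : ℤ → ℤ → ℂ) (r : ℤ) (l : Fin m) : ℂ :=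
  (1 / 2 : ℂ) * t r 0 + ∑ s ∈ Finset.range (l : ℕ), t r (-((s : ℤ) + 1))

/-- `M_{12} = {ℳ_{12}^{(p−q)}}`. -/
def M12 (m n : ℕ) (t : ℤ → ℤ → ℂ) : Matrix (Fin n × Fin m) (Fin n) ℂ :=
  Matrix.of fun r q => m12e m t (((r.1 : ℕ) : ℤ) - ((q : ℕ) : ℤ)) r.2

/-- `M_{22}`. -/
def M22 (m n : ℕ) : Matrix (Fin n) (Fin n × Fin m) ℂ :=
  Matrix.of fun p c => if p = c.1 then 1 else 0

/-- `M_{32} = M_{22}^*`. -/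
def M32 (m n : ℕ) : Matrix (Fin n × Fin m) (Fin n) ℂ := (M22 m n)ᴴ

/-- `M_{42} = {ℳ_{42}^{(p−q)}}`. -/
def M42 (m n : ℕ) (t : ℤ → ℤ → ℂ) : Matrix (Fin n) (Fin n × Fin m) ℂ :=
  Matrix.of fun p c => m42e m t (((p : ℕ) : ℤ) - ((c.1 : ℕ) : ℤ)) c.2

/-- `K`: the `1×mn` row, `q`-th block `(1/2)ℳ_{42}^{(0)} + Σ_{s=1}^{q−1} ℳ_{42}^{(−s)}`. -/
def Krow (m n : ℕ) (t : ℤ → ℤ → ℂ) : (Fin n × Fin m) → ℂ :=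
  fun c => (1 / 2 : ℂ) * m42e m t 0 c.2
    + ∑ s ∈ Finset.range (c.1 : ℕ), m42e m t (-((s : ℤ) + 1)) c.2

/-- `K_{11}`: `p`-th row `(1/2)ℳ_{42}^{(0)} + Σ_{s=1}^{p−1} ℳ_{42}^{(s)}`. -/
def K11 (m n : ℕ) (t : ℤ → ℤ → ℂ) : Matrix (Fin n) (Fin m) ℂ :=
  Matrix.of fun p l => (1 / 2 : ℂ) * m42e m t 0 l
    + ∑ s ∈ Finset.range (p : ℕ), m42e m t ((s : ℤ) + 1) l

/-- `K_{12}`: `q`-th column `(1/2)ℳ_{12}^{(0)} + Σ_{s=1}^{q−1} ℳ_{12}^{(−s)}`. -/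
def K12 (m n : ℕ) (t : ℤ → ℤ → ℂ) : Matrix (Fin m) (Fin n) ℂ :=
  Matrix.of fun j q => (1 / 2 : ℂ) * m12e m t 0 j
    + ∑ s ∈ Finset.range (q : ℕ), m12e m t (-((s : ℤ) + 1)) j

/-- `Π_1 = [M_{11} M_{31}]`. -/
def Pi1 (m n : ℕ) (t : ℤ → ℤ → ℂ) : Matrix (Fin n × Fin m) (Fin m ⊕ Fin m) ℂ :=
  fromCols (M11 m n t) (M31 m n)

/-- `Π_2 = [M_{12} M_{32}]`. -/
def Pi2 (m n : ℕ) (t : ℤ → ℤ → ℂ) : Matrix (Fin n × Fin m) (Fin n ⊕ Fin n) ℂ :=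
  fromCols (M12 m n t) (M32 m n)

/-- `Π̂_1 = col[M_{21}; M_{41}]`. -/
def PiHat1 (m n : ℕ) (t : ℤ → ℤ → ℂ) : Matrix (Fin m ⊕ Fin m) (Fin n × Fin m) ℂ :=
  fromRows (M21 m n) (M41 m n t)

/-- `Π̂_2 = col[M_{22}; M_{42}]`. -/
def PiHat2 (m n : ℕ) (t : ℤ → ℤ → ℂ) : Matrix (Fin n ⊕ Fin n) (Fin n × Fin m) ℂ :=
  fromRows (M22 m n) (M42 m n t)

/-- All-ones vector. -/
def onesV (k : Type*) : k → ℂ := fun _ => 1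

/-- `g_{12} = i·Π̂_1 T^{-1} Π_2 − i·[[𝟏_m 𝟏_n^*, 0],[K_{12}, 0]]`. -/
def g12M (m n : ℕ) (t : ℤ → ℤ → ℂ) : Matrix (Fin m ⊕ Fin m) (Fin n ⊕ Fin n) ℂ :=
  Complex.I • (PiHat1 m n t * (TBT m n t)⁻¹ * Pi2 m n t)
    - Complex.I • fromBlocks (vecMulVec (onesV (Fin m)) (onesV (Fin n))) 0 (K12 m n t) 0

/-- `g_{21} = i·Π̂_2 T^{-1} Π_1 − i·[[𝟏_n 𝟏_m^*, 0],[K_{11}, 0]]`. -/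
def g21M (m n : ℕ) (t : ℤ → ℤ → ℂ) : Matrix (Fin n ⊕ Fin n) (Fin m ⊕ Fin m) ℂ :=
  Complex.I • (PiHat2 m n t * (TBT m n t)⁻¹ * Pi1 m n t)
    - Complex.I • fromBlocks (vecMulVec (onesV (Fin n)) (onesV (Fin m))) 0 (K11 m n t) 0

/-- The `k×k` flip (anti-diagonal) matrix. -/
def flipU (k : ℕ) : Matrix (Fin k) (Fin k) ℂ :=
  Matrix.of fun p q => if (p : ℕ) + (q : ℕ) + 1 = k then 1 else 0

/-- `U_{2k}`, the `2k×2k` flip matrix on the sum type. -/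
def U2 (k : ℕ) : Matrix (Fin k ⊕ Fin k) (Fin k ⊕ Fin k) ℂ :=
  fromBlocks 0 (flipU k) (flipU k) 0

/-- `J_{2k} = diag{I_k, −I_k}`. -/
def J2 (k : ℕ) : Matrix (Fin k ⊕ Fin k) (Fin k ⊕ Fin k) ℂ :=
  fromBlocks 1 0 0 (-1)

/-- `U = U_{mn}`, the `mn×mn` flip matrix (global index `m·p + j`). -/
def UmnM (m n : ℕ) : Matrix (Fin n × Fin m) (Fin n × Fin m) ℂ :=
  Matrix.of fun r c =>
    if m * (r.1 : ℕ) + (r.2 : ℕ) + (m * (c.1 : ℕ) + (c.2 : ℕ)) + 1 = m * n then 1 else 0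

/-- `ψ(λ) = (λ + i/2)/(λ − i/2)`. -/
def psiM (l : ℂ) : ℂ := (l + Complex.I / 2) / (l - Complex.I / 2)

/-- `h(y_1, y_2)`, entry `y_1^{p−1} y_2^{j−1}`. -/
def hVec (m n : ℕ) (y1 y2 : ℂ) : (Fin n × Fin m) → ℂ :=
  fun r => y1 ^ (r.1 : ℕ) * y2 ^ (r.2 : ℕ)

/-- `ω(λ,μ) = 𝟏^*(A_1^*−μ_1)^{-1}(A_2^*−μ_2)^{-1}T^{-1}(A_2−λ_2)^{-1}(A_1−λ_1)^{-1}𝟏`. -/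
def omegaF (m n : ℕ) (t : ℤ → ℤ → ℂ) (l1 l2 u1 u2 : ℂ) : ℂ :=
  star (onesV (Fin n × Fin m)) ⬝ᵥ
    ((((A1 m n)ᴴ - u1 • 1)⁻¹ * ((A2 m n)ᴴ - u2 • 1)⁻¹ * (TBT m n t)⁻¹ *
      (A2 m n - l2 • 1)⁻¹ * (A1 m n - l1 • 1)⁻¹) *ᵥ onesV (Fin n × Fin m))

/-- `ρ(y,z) = h(conj z_1, conj z_2)^* T^{-1} h(y_1,y_2)`. -/
def rhoF (m n : ℕ) (t : ℤ → ℤ → ℂ) (y1 y2 z1 z2 : ℂ) : ℂ :=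
  star (hVec m n ((starRingEnd ℂ) z1) ((starRingEnd ℂ) z2)) ⬝ᵥ
    ((TBT m n t)⁻¹ *ᵥ hVec m n y1 y2)

/-- `Γ_1 = T^{-1}Π_1`. -/
def Gam1 (m n : ℕ) (t : ℤ → ℤ → ℂ) : Matrix (Fin n × Fin m) (Fin m ⊕ Fin m) ℂ :=
  (TBT m n t)⁻¹ * Pi1 m n t

/-- `Γ_2 = T^{-1}Π_2`. -/
def Gam2 (m n : ℕ) (t : ℤ → ℤ → ℂ) : Matrix (Fin n × Fin m) (Fin n ⊕ Fin n) ℂ :=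
  (TBT m n t)⁻¹ * Pi2 m n t

/-- `Γ̂_1 = Π̂_1 T^{-1}`. -/
def GamHat1 (m n : ℕ) (t : ℤ → ℤ → ℂ) : Matrix (Fin m ⊕ Fin m) (Fin n × Fin m) ℂ :=
  PiHat1 m n t * (TBT m n t)⁻¹

/-- `Γ̂_2 = Π̂_2 T^{-1}`. -/
def GamHat2 (m n : ℕ) (t : ℤ → ℤ → ℂ) : Matrix (Fin n ⊕ Fin n) (Fin n × Fin m) ℂ :=
  PiHat2 m n t * (TBT m n t)⁻¹

/-- `Γ = [Γ_1 Γ_2]`. -/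
def GammaFull (m n : ℕ) (t : ℤ → ℤ → ℂ) :
    Matrix (Fin n × Fin m) ((Fin m ⊕ Fin m) ⊕ (Fin n ⊕ Fin n)) ℂ :=
  fromCols (Gam1 m n t) (Gam2 m n t)

/-- `Γ̂ = col[Γ̂_1; Γ̂_2]`. -/
def GammaHatFull (m n : ℕ) (t : ℤ → ℤ → ℂ) :
    Matrix ((Fin m ⊕ Fin m) ⊕ (Fin n ⊕ Fin n)) (Fin n × Fin m) ℂ :=
  fromRows (GamHat1 m n t) (GamHat2 m n t)

/-- The row vector `u(μ)`. -/
def uRow (m n : ℕ) (t : ℤ → ℤ → ℂ) (u1 u2 : ℂ) :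
    ((Fin m ⊕ Fin m) ⊕ (Fin n ⊕ Fin n)) → ℂ :=
  star (onesV (Fin n × Fin m)) ᵥ*
      (((A1 m n)ᴴ - u1 • 1)⁻¹ * ((A2 m n)ᴴ - u2 • 1)⁻¹ * GammaFull m n t)
    - Complex.I • Sum.elim
        (Sum.elim (star (onesV (Fin m)) ᵥ* ((calA2 m)ᴴ - u2 • 1)⁻¹) (0 : Fin m → ℂ))
        (Sum.elim (star (onesV (Fin n)) ᵥ* ((calA1 n)ᴴ - u1 • 1)⁻¹) (0 : Fin n → ℂ))

/-- The column vector `û(λ)`. -/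
def uHatCol (m n : ℕ) (t : ℤ → ℤ → ℂ) (l1 l2 : ℂ) :
    ((Fin m ⊕ Fin m) ⊕ (Fin n ⊕ Fin n)) → ℂ :=
  (GammaHatFull m n t * (A2 m n - l2 • 1)⁻¹ * (A1 m n - l1 • 1)⁻¹) *ᵥ onesV (Fin n × Fin m)
    + Complex.I • Sum.elim
        (Sum.elim (0 : Fin m → ℂ) ((calA2 m - l2 • 1)⁻¹ *ᵥ onesV (Fin m)))
        (Sum.elim (0 : Fin n → ℂ) ((calA1 n - l1 • 1)⁻¹ *ᵥ onesV (Fin n)))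

/-- `P_1 = diag{I_{2m}, 0}`. -/
def P1M (m n : ℕ) :
    Matrix ((Fin m ⊕ Fin m) ⊕ (Fin n ⊕ Fin n)) ((Fin m ⊕ Fin m) ⊕ (Fin n ⊕ Fin n)) ℂ :=
  fromBlocks 1 0 0 0

/-- `P_2 = I − P_1`. -/
def P2M (m n : ℕ) :
    Matrix ((Fin m ⊕ Fin m) ⊕ (Fin n ⊕ Fin n)) ((Fin m ⊕ Fin m) ⊕ (Fin n ⊕ Fin n)) ℂ :=
  1 - P1M m n

/-- `G(λ)`, built from `g_{12}` and `g_{21}`. -/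
def GMat (m n : ℕ) (g12 : Matrix (Fin m ⊕ Fin m) (Fin n ⊕ Fin n) ℂ)
    (g21 : Matrix (Fin n ⊕ Fin n) (Fin m ⊕ Fin m) ℂ) (l1 l2 : ℂ) :
    Matrix ((Fin m ⊕ Fin m) ⊕ (Fin n ⊕ Fin n)) ((Fin m ⊕ Fin m) ⊕ (Fin n ⊕ Fin n)) ℂ :=
  fromBlocks (fromBlocks (calA2 m - l2 • 1) 0 0 (calA2 m - l2 • 1)) g12
             g21 (fromBlocks (calA1 n - l1 • 1) 0 0 (calA1 n - l1 • 1))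

/-- `G` as a matrix over the polynomial ring `ℂ[λ_1, λ_2]` (variables `X 0 = λ_1`, `X 1 = λ_2`). -/
def GPoly (m n : ℕ) (g12 : Matrix (Fin m ⊕ Fin m) (Fin n ⊕ Fin n) ℂ)
    (g21 : Matrix (Fin n ⊕ Fin n) (Fin m ⊕ Fin m) ℂ) :
    Matrix ((Fin m ⊕ Fin m) ⊕ (Fin n ⊕ Fin n)) ((Fin m ⊕ Fin m) ⊕ (Fin n ⊕ Fin n))
      (MvPolynomial (Fin 2) ℂ) :=
  fromBlocks
    (fromBlocks ((calA2 m).map MvPolynomial.C - (MvPolynomial.X 1 : MvPolynomial (Fin 2) ℂ) • 1) 0 0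
      ((calA2 m).map MvPolynomial.C - (MvPolynomial.X 1 : MvPolynomial (Fin 2) ℂ) • 1))
    (g12.map MvPolynomial.C)
    (g21.map MvPolynomial.C)
    (fromBlocks ((calA1 n).map MvPolynomial.C - (MvPolynomial.X 0 : MvPolynomial (Fin 2) ℂ) • 1) 0 0
      ((calA1 n).map MvPolynomial.C - (MvPolynomial.X 0 : MvPolynomial (Fin 2) ℂ) • 1))

/-- The vector `col[0_m; 𝟏_m; 0_n; 𝟏_n]`. -/
def eVec (m n : ℕ) : ((Fin m ⊕ Fin m) ⊕ (Fin n ⊕ Fin n)) → ℂ :=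
  Sum.elim (Sum.elim (0 : Fin m → ℂ) (onesV (Fin m))) (Sum.elim (0 : Fin n → ℂ) (onesV (Fin n)))

/-- `diag{J_{2m}U_{2m}, J_{2n}U_{2n}}`. -/
def DJU (m n : ℕ) :
    Matrix ((Fin m ⊕ Fin m) ⊕ (Fin n ⊕ Fin n)) ((Fin m ⊕ Fin m) ⊕ (Fin n ⊕ Fin n)) ℂ :=
  fromBlocks (J2 m * U2 m) 0 0 (J2 n * U2 n)

/-- The block column `col[I_m; I_m; …; I_m]`. -/
def EcolId (m n : ℕ) : Matrix (Fin n × Fin m) (Fin m) ℂ :=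
  Matrix.of fun r l => if r.2 = l then 1 else 0

/-!
The TBT matrix is persymmetric: reversing the order of rows and columns, `U T U = Tᵀ`, hence
`(T⁻¹)ᵀ = U T⁻¹ U` and `Γ̂_pᵀ = U T⁻¹ (U Π̂_pᵀ)`. Everything then rests on the identity
`U Π̂_pᵀ = Π_p U_{2k} J_{2k} + T U [0 M_{3p}]`, checked entrywise: its only nontrivial column
compares the half-sums defining `M_{41}` (resp. `M_{42}`) with those defining `M_{11}`
(resp. `M_{12}`), and their difference is a full row sum `Σ_q t_{p-q}` of `T`, i.e. an entry of
`T U M_{3p}`. Multiplying by `U T⁻¹` turns that term into `[0 M_{3p}]`.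
-/

open Finset in
theorem Fin.sum_apply_sub_split {M : Type*} [AddCommMonoid M] {n : ℕ} (f : ℤ → M) (p : Fin n) :
    ∑ q : Fin n, f ((p : ℕ) - (q : ℕ))
      = f 0 + ∑ s ∈ range p, f ((s : ℤ) + 1) + ∑ s ∈ range p.rev, f (-((s : ℤ) + 1)) := by
  have hn : range n = range ((p + 1) + p.rev) := by rw [Fin.val_rev]; congr 1; omega
  have head : ∑ q ∈ range (p + 1), f ((p : ℕ) - (q : ℕ)) = ∑ q ∈ range (p + 1), f (q : ℕ) := by
    rw [← sum_range_reflect (fun q : ℕ => f q)]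
    refine sum_congr rfl fun q hq => ?_
    have := mem_range.mp hq
    congr 1; omega
  rw [Fin.sum_univ_eq_sum_range (fun q => f ((p : ℕ) - (q : ℕ))), hn, sum_range_add, head,
    sum_range_succ']
  push_cast
  rw [add_comm (∑ s ∈ range p, _)]
  congr 2
  funext s
  congr 1
  ring

theorem Nat.mul_add_add_mul_add_add_one_eq_mul_iff {m n a b c d : ℕ} (ha : a < n) (hc : c < n)
    (hb : b < m) (hd : d < m) :
    m * a + b + (m * c + d) + 1 = m * n ↔ a + c + 1 = n ∧ b + d + 1 = m := by
  constructor
  · intro h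
    have hac : a + c + 1 = n := by
      rcases lt_trichotomy (a + c + 1) n with h' | h' | h'
      · nlinarith
      · exact h'
      · nlinarith
    subst hac
    exact ⟨rfl, by nlinarith⟩
  · rintro ⟨rfl, rfl⟩
    ring

theorem transpose_mul_inv_of_persymmetric {R ι κ : Type*} [CommRing R] [Fintype ι]
    [DecidableEq ι] [Fintype κ] {T U : Matrix ι ι R} (hT : IsUnit T) (hU : U * U = 1)
    (hUTU : U * T * U = Tᵀ)
    {P : Matrix ι κ R} {Q : Matrix κ ι R} {W : Matrix κ κ R} {Z : Matrix ι κ R}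
    (h : U * Qᵀ = P * W + T * (U * Z)) :
    (Q * T⁻¹)ᵀ = U * (T⁻¹ * P) * W + Z := by
  have hTT : T⁻¹ * T = 1 := nonsing_inv_mul T ((isUnit_iff_isUnit_det T).mp hT)
  have hinvT : T⁻¹ᵀ = U * T⁻¹ * U := by
    rw [transpose_nonsing_inv, ← hUTU, Matrix.mul_inv_rev, Matrix.mul_inv_rev,
      inv_eq_left_inv hU, Matrix.mul_assoc]
  calc (Q * T⁻¹)ᵀ
      = U * T⁻¹ * (U * Qᵀ) := by rw [transpose_mul, hinvT]; simp only [Matrix.mul_assoc]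
    _ = U * (T⁻¹ * P) * W + U * (T⁻¹ * T) * (U * Z) := by
      rw [h]; simp only [Matrix.mul_add, Matrix.mul_assoc]
    _ = U * (T⁻¹ * P) * W + Z := by
      rw [hTT, Matrix.mul_one, ← Matrix.mul_assoc U U, hU, Matrix.one_mul]

section Flip

variable {m n : ℕ}

theorem flipU_eq (k : ℕ) : flipU k = (Fin.revPerm : Equiv.Perm (Fin k)).toPEquiv.toMatrix := by
  ext p q
  simp only [flipU, of_apply, PEquiv.toMatrix_toPEquiv_apply, Pi.single_apply, Fin.revPerm_apply,
    Fin.ext_iff, Fin.val_rev]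
  congr 1
  simp only [eq_iff_iff]
  omega

theorem UmnM_eq : UmnM m n
    = (Fin.revPerm.prodCongr Fin.revPerm : Equiv.Perm (Fin n × Fin m)).toPEquiv.toMatrix := by
  ext ⟨a, b⟩ ⟨c, d⟩
  simp only [UmnM, of_apply, PEquiv.toMatrix_toPEquiv_apply, Pi.single_apply,
    Equiv.prodCongr_apply, Prod.map, Fin.revPerm_apply, Prod.ext_iff, Fin.ext_iff, Fin.val_rev,
    Nat.mul_add_add_mul_add_add_one_eq_mul_iff a.isLt c.isLt b.isLt d.isLt]
  congr 1
  simp only [eq_iff_iff]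
  omega

theorem UmnM_mul {ι : Type*} (A : Matrix (Fin n × Fin m) ι ℂ) :
    UmnM m n * A = A.submatrix (Prod.map Fin.rev Fin.rev) id := by
  rw [UmnM_eq, PEquiv.toMatrix_toPEquiv_mul]
  rfl

theorem mul_UmnM {ι : Type*} [Fintype ι] (A : Matrix ι (Fin n × Fin m) ℂ) :
    A * UmnM m n = A.submatrix id (Prod.map Fin.rev Fin.rev) := by
  rw [UmnM_eq, PEquiv.mul_toMatrix_toPEquiv]
  rfl

theorem mul_flipU {ι : Type*} [Fintype ι] (A : Matrix ι (Fin n) ℂ) :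
    A * flipU n = A.submatrix id Fin.rev := by
  rw [flipU_eq, PEquiv.mul_toMatrix_toPEquiv]
  rfl

theorem UmnM_mul_UmnM : UmnM m n * UmnM m n = 1 := by
  rw [UmnM_mul]
  ext r c
  simp [UmnM_eq, one_apply, Prod.ext_iff, eq_comm]

theorem UmnM_mul_TBT_mul_UmnM (t : ℤ → ℤ → ℂ) :
    UmnM m n * TBT m n t * UmnM m n = (TBT m n t)ᵀ := by
  ext ⟨p, j⟩ ⟨q, l⟩
  simp only [UmnM_mul, mul_UmnM, submatrix_apply, transpose_apply, TBT, of_apply, Prod.map,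
    id, Fin.val_rev]
  congr 1 <;> omega

end Flip

theorem U2_mul_J2 (k : ℕ) : U2 k * J2 k = fromBlocks 0 (-flipU k) (flipU k) 0 := by
  simp [U2, J2, fromBlocks_multiply]

section BlockColumns

variable {m n : ℕ}

theorem M31_apply (r : Fin n × Fin m) (j : Fin m) : M31 m n r j = if r.2 = j then 1 else 0 := by
  simp [M31, M21, eq_comm]

theorem M32_apply (r : Fin n × Fin m) (q : Fin n) : M32 m n r q = if r.1 = q then 1 else 0 := by
  simp [M32, M22, eq_comm]

theorem mul_M31_apply {ι : Type*} (A : Matrix ι (Fin n × Fin m) ℂ) (i : ι) (j : Fin m) :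
    (A * M31 m n) i j = ∑ q, A i (q, j) := by
  simp [mul_apply, M31_apply, Fintype.sum_prod_type]

theorem mul_M32_apply {ι : Type*} (A : Matrix ι (Fin n × Fin m) ℂ) (i : ι) (q : Fin n) :
    (A * M32 m n) i q = ∑ k, A i (q, k) := by
  simp [mul_apply, M32_apply, Fintype.sum_prod_type_right]

theorem UmnM_mul_M31 : UmnM m n * M31 m n = M31 m n * flipU m := by
  ext r j
  simp [UmnM_mul, mul_flipU, M31_apply, Fin.rev_eq_iff]

theorem UmnM_mul_M32 : UmnM m n * M32 m n = M32 m n * flipU n := by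
  ext r q
  simp [UmnM_mul, mul_flipU, M32_apply, Fin.rev_eq_iff]

end BlockColumns

theorem UmnM_mul_transpose_PiHat1 (m n : ℕ) (t : ℤ → ℤ → ℂ) :
    UmnM m n * (PiHat1 m n t)ᵀ
      = Pi1 m n t * (U2 m * J2 m) + TBT m n t * (UmnM m n * fromCols 0 (M31 m n)) := by
  rw [U2_mul_J2, Pi1, fromCols_mul_fromBlocks, mul_fromCols, mul_fromCols, UmnM_mul_M31,
    ← Matrix.mul_assoc (TBT m n t) (M31 m n)]
  ext ⟨p, l⟩ (j | j)
  · simp [UmnM_mul, mul_flipU, PiHat1, M21, M31_apply, eq_comm (a := j), Fin.rev_eq_iff]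
  · have hd : ((j : ℕ) : ℤ) - (l.rev : ℕ) = (l : ℕ) - (j.rev : ℕ) := by
      simp only [Fin.val_rev]; omega
    simp only [UmnM_mul, mul_flipU, PiHat1, M41, M11, mul_M31_apply, TBT, submatrix_apply,
      transpose_apply, fromRows_apply_inr, Matrix.add_apply, fromCols_apply_inr, Matrix.neg_apply,
      of_apply, Matrix.mul_zero, Matrix.zero_apply, Prod.map, id, hd,
      Matrix.mul_neg, Fin.sum_apply_sub_split (fun z => t z ((l : ℕ) - (j.rev : ℕ))) p]
    ring

theorem UmnM_mul_transpose_PiHat2 (m n : ℕ) (t : ℤ → ℤ → ℂ) :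
    UmnM m n * (PiHat2 m n t)ᵀ
      = Pi2 m n t * (U2 n * J2 n) + TBT m n t * (UmnM m n * fromCols 0 (M32 m n)) := by
  rw [U2_mul_J2, Pi2, fromCols_mul_fromBlocks, mul_fromCols, mul_fromCols, UmnM_mul_M32,
    ← Matrix.mul_assoc (TBT m n t) (M32 m n)]
  ext ⟨p, l⟩ (q | q)
  · simp [UmnM_mul, mul_flipU, PiHat2, M22, M32_apply, eq_comm (a := q), Fin.rev_eq_iff]
  · have hd : ((q : ℕ) : ℤ) - (p.rev : ℕ) = (p : ℕ) - (q.rev : ℕ) := by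
      simp only [Fin.val_rev]; omega
    simp only [UmnM_mul, mul_flipU, PiHat2, M42, M12, m42e, m12e, mul_M32_apply, TBT,
      submatrix_apply, transpose_apply, fromRows_apply_inr, Matrix.add_apply, fromCols_apply_inr,
      Matrix.neg_apply, of_apply, Matrix.mul_zero, Matrix.zero_apply, Prod.map, id, hd,
      Matrix.mul_neg, Fin.sum_apply_sub_split (fun z => t ((p : ℕ) - (q.rev : ℕ)) z) l]
    ring

theorem GammaHat_transpose_general (m n : ℕ) (t : ℤ → ℤ → ℂ)
    (hT : IsUnit (TBT m n t)) :
    (GamHat1 m n t)ᵀ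
        = UmnM m n * Gam1 m n t * (U2 m * J2 m)
          + fromCols (0 : Matrix (Fin n × Fin m) (Fin m) ℂ) (M31 m n) ∧
    (GamHat2 m n t)ᵀ
        = UmnM m n * Gam2 m n t * (U2 n * J2 n)
          + fromCols (0 : Matrix (Fin n × Fin m) (Fin n) ℂ) (M32 m n) :=
  ⟨transpose_mul_inv_of_persymmetric hT UmnM_mul_UmnM (UmnM_mul_TBT_mul_UmnM t)
      (UmnM_mul_transpose_PiHat1 m n t),
    transpose_mul_inv_of_persymmetric hT UmnM_mul_UmnM (UmnM_mul_TBT_mul_UmnM t)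
      (UmnM_mul_transpose_PiHat2 m n t)⟩

/-- `Γ̂_1^τ = UΓ_1U_{2m}J_{2m} + [0 M_{31}]` and
`Γ̂_2^τ = UΓ_2U_{2n}J_{2n} + [0 M_{32}]`. -/
theorem GammaHat_transpose (m n : ℕ) (hm : 0 < m) (hn : 0 < n) (t : ℤ → ℤ → ℂ)
    (hT : IsUnit (TBT m n t)) :
    (GamHat1 m n t)ᵀ
        = UmnM m n * Gam1 m n t * (U2 m * J2 m)
          + fromCols (0 : Matrix (Fin n × Fin m) (Fin m) ℂ) (M31 m n) ∧
    (GamHat2 m n t)ᵀ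
        = UmnM m n * Gam2 m n t * (U2 n * J2 n)
          + fromCols (0 : Matrix (Fin n × Fin m) (Fin n) ℂ) (M32 m n) :=
  GammaHat_transpose_general m n t hT

end
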